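/- arXiv:2406.01305 — 3 statements merged into one kernel-verified Lean document; each statement's English description precedes it below -/
import Mathlib

section
/- Let p be a prime and let P be a finite non-abelian p-group. Then there exist p+1 elements a_1, ..., a_{p+1} of P that are pairwise non-commuting (a_i a_j ≠ a_j a_i for i ≠ j) and pairwise non-conjugate in P (no a_i is conjugate to a_j for i ≠ j). -/
/-!
Pass to a quotient `Q` of `P` that is minimal among the non-abelian ones, so that every nontrivial
normal subgroup of `Q` contains `[Q, Q]`. A central subgroup of order `p` is such a subgroup, hence
`[Q, Q]` is central of order `p`. Then `Q` has nilpotency class two: commutators are bilinear, and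
for `c = [a, b] ≠ 1` the elements `b, a, ab, …, ab^(p-1)` pairwise have the nontrivial commutators
`c⁻¹` and `c^(n-m)`. Conjugate elements of a group of class two commute, so these `p + 1` elements
are also pairwise non-conjugate, and any lifts of them to `P` keep both properties.
-/

open Subgroup
open scoped commutatorElement

section CommutatorLeCenter

variable {G : Type*} [Group G]

theorem commutatorElement_mem_center_of_commutator_le_center (hG : commutator G ≤ center G)
    (g h : G) : ⁅g, h⁆ ∈ center G :=
  hG (commutator_mem_commutator (mem_top g) (mem_top h))

theorem commutatorElement_mul_left_of_commutator_le_center (hG : commutator G ≤ center G)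
    (a b c : G) : ⁅a * b, c⁆ = ⁅b, c⁆ * ⁅a, c⁆ := by
  rw [commutatorElement_mul_left_eq_conj_mul,
    mem_center_iff.mp (commutatorElement_mem_center_of_commutator_le_center hG b c) a,
    mul_inv_cancel_right]

theorem commutatorElement_mul_right_of_commutator_le_center (hG : commutator G ≤ center G)
    (a b c : G) : ⁅a, b * c⁆ = ⁅a, b⁆ * ⁅a, c⁆ := by
  rw [commutatorElement_mul_right_eq_mul_conj, mul_assoc _ b,
    mem_center_iff.mp (commutatorElement_mem_center_of_commutator_le_center hG a c) b,
    ← mul_assoc, mul_inv_cancel_right]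

theorem commutatorElement_pow_right_of_commutator_le_center (hG : commutator G ≤ center G)
    (a b : G) (n : ℕ) : ⁅a, b ^ n⁆ = ⁅a, b⁆ ^ n := by
  induction n with
  | zero => simp
  | succ n ih =>
    rw [pow_succ, commutatorElement_mul_right_of_commutator_le_center hG, ih, pow_succ]

theorem commutatorElement_mul_pow_of_commutator_le_center (hG : commutator G ≤ center G)
    (a b : G) (m n : ℕ) : ⁅a * b ^ m, a * b ^ n⁆ = (⁅a, b⁆ ^ m)⁻¹ * ⁅a, b⁆ ^ n := by
  have hbb : ⁅b ^ m, b ^ n⁆ = 1 :=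
    commutatorElement_eq_one_iff_commute.mpr ((Commute.refl b).pow_pow m n)
  simp only [commutatorElement_mul_left_of_commutator_le_center hG,
    commutatorElement_mul_right_of_commutator_le_center hG, commutatorElement_self, hbb,
    ← commutatorElement_inv a, commutatorElement_pow_right_of_commutator_le_center hG, mul_one,
    one_mul]

theorem IsConj.commute_of_commutator_le_center (hG : commutator G ≤ center G) {x y : G}
    (hxy : IsConj x y) : Commute x y := by
  obtain ⟨h, rfl⟩ := isConj_iff.mp hxy
  have hc := mem_center_iff.mp (commutatorElement_mem_center_of_commutator_le_center hG h x)
  have hconj : h * x * h⁻¹ = ⁅h, x⁆ * x := by rw [commutatorElement_def]; group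
  rw [hconj]
  exact Commute.mul_right (hc x) (Commute.refl x)

theorem exists_pairwise_not_commute_of_commutator_le_center (hG : commutator G ≤ center G)
    {a b : G} (hab : ⁅a, b⁆ ≠ 1) :
    ∃ x : Fin (orderOf ⁅a, b⁆ + 1) → G, Pairwise fun i j => ¬ Commute (x i) (x j) := by
  have hb : ∀ n : ℕ, ¬ Commute b (a * b ^ n) := by
    intro n h
    have hbn : ⁅b, b ^ n⁆ = 1 :=
      commutatorElement_eq_one_iff_commute.mpr ((Commute.refl b).pow_right n)
    rw [← commutatorElement_eq_one_iff_commute,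
      commutatorElement_mul_right_of_commutator_le_center hG, hbn, mul_one,
      ← commutatorElement_inv, inv_eq_one] at h
    exact hab h
  have hab_pow : ∀ m n : Fin (orderOf ⁅a, b⁆), m ≠ n →
      ¬ Commute (a * b ^ (m : ℕ)) (a * b ^ (n : ℕ)) := by
    intro m n hmn h
    rw [← commutatorElement_eq_one_iff_commute,
      commutatorElement_mul_pow_of_commutator_le_center hG, inv_mul_eq_one] at h
    exact hmn (Fin.ext (pow_injOn_Iio_orderOf m.isLt n.isLt h))
  refine ⟨Fin.cons b fun n => a * b ^ (n : ℕ), fun i j hij => ?_⟩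
  cases i using Fin.cases with
  | zero =>
    cases j using Fin.cases with
    | zero => exact absurd rfl hij
    | succ n => exact hb n
  | succ m =>
    cases j using Fin.cases with
    | zero => exact fun h => hb m h.symm
    | succ n => exact hab_pow m n fun h => hij (congrArg Fin.succ h)

end CommutatorLeCenter

theorem exists_pairwise_not_commute_not_isConj_of_surjective {G H ι : Type*} [Group G] [Group H]
    {f : G →* H} (hf : Function.Surjective f) {x : ι → H}
    (hx : Pairwise fun i j => ¬ Commute (x i) (x j) ∧ ¬ IsConj (x i) (x j)) :
    ∃ y : ι → G, Pairwise fun i j => ¬ Commute (y i) (y j) ∧ ¬ IsConj (y i) (y j) := by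
  refine ⟨fun i => Function.surjInv hf (x i), fun i j hij => ⟨fun h => (hx hij).1 ?_,
    fun h => (hx hij).2 ?_⟩⟩
  · simpa only [Function.surjInv_eq hf] using h.map f
  · simpa only [Function.surjInv_eq hf] using f.map_isConj h

theorem QuotientGroup.exists_not_commute_of_not_commutator_le {G : Type*} [Group G]
    {N : Subgroup G} [N.Normal] (hN : ¬ commutator G ≤ N) :
    ∃ a b : G ⧸ N, ¬ Commute a b := by
  rw [_root_.commutator, commutator_le] at hN
  push Not at hN
  obtain ⟨x, -, y, -, hxy⟩ := hN
  refine ⟨x, y, fun h => hxy ?_⟩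
  rw [← QuotientGroup.eq_one_iff]
  exact (map_commutatorElement (QuotientGroup.mk' N) x y).trans
    (commutatorElement_eq_one_iff_commute.mpr h)

theorem Subgroup.card_quotient_lt {G : Type*} [Group G] [Finite G] {N : Subgroup G}
    (hN : N ≠ ⊥) : Nat.card (G ⧸ N) < Nat.card G := by
  rw [card_eq_card_quotient_mul_card_subgroup N]
  exact lt_mul_of_one_lt_right Nat.card_pos ((one_lt_card_iff_ne_bot N).mpr hN)

namespace IsPGroup

variable {p : ℕ} [Fact p.Prime] {G : Type*} [Group G] [Finite G]

theorem commutator_le_center_and_orderOf_eq (hG : IsPGroup p G)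
    (hmin : ∀ N : Subgroup G, N.Normal → N ≠ ⊥ → commutator G ≤ N) {a b : G}
    (hab : ⁅a, b⁆ ≠ 1) : commutator G ≤ center G ∧ orderOf ⁅a, b⁆ = p := by
  have : Nontrivial G := ⟨⟨_, _, hab⟩⟩
  obtain ⟨z, hz⟩ := exists_prime_orderOf_dvd_card' (G := center G) p
    ((hG.to_subgroup _).card_eq_or_dvd.resolve_left
      (Finite.one_lt_card_iff_nontrivial.mpr hG.center_nontrivial).ne')
  have hz_le : zpowers (z : G) ≤ center G := zpowers_le.mpr z.2
  have hz_normal : (zpowers (z : G)).Normal :=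
    ⟨fun n hn g => by rw [(mem_center_iff.mp (hz_le hn) g), mul_inv_cancel_right]; exact hn⟩
  have hz_ne_bot : zpowers (z : G) ≠ ⊥ := by
    rw [Ne, zpowers_eq_bot, ← orderOf_eq_one_iff, orderOf_submonoid, hz]
    exact (Fact.out : p.Prime).one_lt.ne'
  have hcomm := hmin _ hz_normal hz_ne_bot
  refine ⟨hcomm.trans hz_le, ?_⟩
  have hdvd : orderOf ⁅a, b⁆ ∣ p := by
    rw [← hz, ← orderOf_submonoid]
    exact orderOf_dvd_of_mem_zpowers (hcomm (commutator_mem_commutator (mem_top a) (mem_top b)))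
  exact ((Fact.out : p.Prime).eq_one_or_self_of_dvd _ hdvd).resolve_left
    (orderOf_eq_one_iff.not.mpr hab)

theorem exists_pairwise_not_commute_not_isConj (hG : IsPGroup p G)
    (hna : ∃ a b : G, ¬ Commute a b) :
    ∃ x : Fin (p + 1) → G, Pairwise fun i j => ¬ Commute (x i) (x j) ∧ ¬ IsConj (x i) (x j) := by
  induction h : Nat.card G using Nat.strong_induction_on generalizing G with
  | _ n ih =>
    by_cases hquot : ∃ N : Subgroup G, N.Normal ∧ N ≠ ⊥ ∧ ¬ commutator G ≤ N
    · obtain ⟨N, hN, hN_ne_bot, hN_comm⟩ := hquot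
      obtain ⟨x, hx⟩ := ih _ (h ▸ card_quotient_lt hN_ne_bot) (hG.to_quotient N)
        (QuotientGroup.exists_not_commute_of_not_commutator_le hN_comm) rfl
      exact exists_pairwise_not_commute_not_isConj_of_surjective (QuotientGroup.mk'_surjective N) hx
    · push Not at hquot
      obtain ⟨a, b, hab⟩ := hna
      have hab' : ⁅a, b⁆ ≠ 1 := commutatorElement_eq_one_iff_commute.not.mpr hab
      obtain ⟨hcen, hord⟩ := hG.commutator_le_center_and_orderOf_eq hquot hab'
      obtain ⟨x, hx⟩ := hord ▸ exists_pairwise_not_commute_of_commutator_le_center hcen hab'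
      exact ⟨x, fun i j hij =>
        ⟨hx hij, fun hconj => hx hij (hconj.commute_of_commutator_le_center hcen)⟩⟩

end IsPGroup

theorem nonabelian_pGroup_pairwise_noncommuting_nonconjugate
    (p : ℕ) (hp : p.Prime) (P : Type*) [Group P] [Finite P]
    (hP : IsPGroup p P) (hna : ¬ ∀ a b : P, a * b = b * a) :
    ∃ a : Fin (p + 1) → P, ∀ i j : Fin (p + 1), i ≠ j →
      a i * a j ≠ a j * a i ∧ ¬ IsConj (a i) (a j) := by
  have : Fact p.Prime := ⟨hp⟩
  push Not at hna
  obtain ⟨a, ha⟩ := hP.exists_pairwise_not_commute_not_isConj hna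
  exact ⟨a, fun i j hij => ha hij⟩
end

section
/- Let G be an EPPO group. Then Γ_NCC(G) is claw-free. -/
/-- The set of conjugacy classes of non-central elements of `G`. -/
def NCClass (G : Type*) [Group G] : Type _ :=
  {c : ConjClasses G // ∃ x : G, ConjClasses.mk x = c ∧ x ∉ Subgroup.center G}

/-- The conjugacy class graph associated to a property `P` of subgroups:
two distinct non-central conjugacy classes are adjacent iff they have
representatives `a`, `b` with `P ⟨a, b⟩`. -/
def classGraph (G : Type*) [Group G] (P : Subgroup G → Prop) :
    SimpleGraph (NCClass G) where
  Adj c d := c ≠ d ∧ ∃ a b : G, ConjClasses.mk a = c.1 ∧ ConjClasses.mk b = d.1 ∧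
    P (Subgroup.closure {a, b})
  symm := ⟨by
    rintro c d ⟨hne, a, b, ha, hb, hP⟩
    refine ⟨hne.symm, b, a, hb, ha, ?_⟩
    rwa [Set.pair_comm]⟩
  loopless := ⟨by rintro c ⟨hne, -⟩; exact hne rfl⟩

/-- The commuting conjugacy class graph `Γ_CCC(G)`. -/
def cccGraph (G : Type*) [Group G] : SimpleGraph (NCClass G) :=
  classGraph G (fun H => ∀ x ∈ H, ∀ y ∈ H, x * y = y * x)

/-- The nilpotent conjugacy class graph `Γ_NCC(G)`. -/
def nccGraph (G : Type*) [Group G] : SimpleGraph (NCClass G) :=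
  classGraph G (fun H => Group.IsNilpotent H)

/-- The solvable conjugacy class graph `Γ_SCC(G)`. -/
def sccGraph (G : Type*) [Group G] : SimpleGraph (NCClass G) :=
  classGraph G (fun H => IsSolvable H)

/-- A graph contains an induced path `P₄` on four vertices. -/
def HasInducedP4 {V : Type*} (Γ : SimpleGraph V) : Prop :=
  ∃ a b c d : V, a ≠ b ∧ a ≠ c ∧ a ≠ d ∧ b ≠ c ∧ b ≠ d ∧ c ≠ d ∧
    Γ.Adj a b ∧ Γ.Adj b c ∧ Γ.Adj c d ∧ ¬Γ.Adj a c ∧ ¬Γ.Adj a d ∧ ¬Γ.Adj b d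

/-- A graph is a cograph iff it has no induced `P₄`. -/
def IsCograph {V : Type*} (Γ : SimpleGraph V) : Prop := ¬ HasInducedP4 Γ

/-- A graph contains an induced cycle `Cₙ`. -/
def HasInducedCycle {V : Type*} (Γ : SimpleGraph V) (n : ℕ) : Prop :=
  ∃ f : ZMod n → V, Function.Injective f ∧
    ∀ i j : ZMod n, Γ.Adj (f i) (f j) ↔ (j = i + 1 ∨ i = j + 1)

/-- A graph is chordal iff it has no induced cycle `Cₙ` for `n ≥ 4`. -/
def IsChordal {V : Type*} (Γ : SimpleGraph V) : Prop :=
  ∀ n : ℕ, 4 ≤ n → ¬ HasInducedCycle Γ n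

/-- A graph contains an induced `2K₂`. -/
def Has2K2 {V : Type*} (Γ : SimpleGraph V) : Prop :=
  ∃ a b c d : V, a ≠ b ∧ a ≠ c ∧ a ≠ d ∧ b ≠ c ∧ b ≠ d ∧ c ≠ d ∧
    Γ.Adj a b ∧ Γ.Adj c d ∧ ¬Γ.Adj a c ∧ ¬Γ.Adj a d ∧ ¬Γ.Adj b c ∧ ¬Γ.Adj b d

/-- A graph contains an induced claw `K_{1,3}`: a vertex with three pairwise
non-adjacent neighbours. -/
def HasClaw {V : Type*} (Γ : SimpleGraph V) : Prop :=
  ∃ v a b c : V, a ≠ b ∧ a ≠ c ∧ b ≠ c ∧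
    Γ.Adj v a ∧ Γ.Adj v b ∧ Γ.Adj v c ∧ ¬Γ.Adj a b ∧ ¬Γ.Adj a c ∧ ¬Γ.Adj b c

/-- A graph is claw-free iff it has no induced `K_{1,3}`. -/
def IsClawFree {V : Type*} (Γ : SimpleGraph V) : Prop := ¬ HasClaw Γ

/-- A graph is split iff it has no induced `C₄`, `C₅` or `2K₂`. -/
def IsSplit {V : Type*} (Γ : SimpleGraph V) : Prop :=
  ¬ HasInducedCycle Γ 4 ∧ ¬ HasInducedCycle Γ 5 ∧ ¬ Has2K2 Γ

/-- A graph is threshold iff it has no induced `P₄`, `C₄`, `C₅` or `2K₂`. -/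
def IsThreshold {V : Type*} (Γ : SimpleGraph V) : Prop :=
  ¬ HasInducedP4 Γ ∧ ¬ HasInducedCycle Γ 4 ∧ ¬ HasInducedCycle Γ 5 ∧ ¬ Has2K2 Γ

/-- An EPPO group: every non-identity element has prime power order. -/
def IsEPPO (G : Type*) [Group G] : Prop :=
  ∀ g : G, g ≠ 1 → IsPrimePow (orderOf g)

/-! In an EPPO group, if `x` is a nontrivial `p`-element and `⟨x, a⟩` is nilpotent, then `a` is
a `p`-element as well: otherwise `x` and `a` would be elements of coprime prime power orders in
a finite nilpotent group, hence commute, and `x * a` would not have prime power order. So all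
neighbours of a vertex of `Γ_NCC(G)` consist of `p`-elements for one prime `p`, and any two
`p`-elements have conjugates in a common Sylow `p`-subgroup, which is nilpotent: every
neighbourhood is a clique. -/

theorem Sylow.exists_mem_of_orderOf_eq_pow {G : Type*} [Group G] {p n : ℕ} [Fact p.Prime]
    {g : G} (hg : orderOf g = p ^ n) : ∃ P : Sylow p G, g ∈ P :=
  let ⟨P, hP⟩ := (IsPGroup.of_card (p := p) (G := Subgroup.zpowers g)
    (by rw [Nat.card_zpowers, hg])).exists_le_sylow
  ⟨P, hP (Subgroup.mem_zpowers g)⟩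

theorem Commute.of_orderOf_eq_pow_of_ne {H : Type*} [Group H] [Finite H] [Group.IsNilpotent H]
    {p q i j : ℕ} [Fact p.Prime] [Fact q.Prime] (hpq : p ≠ q) {x y : H}
    (hx : orderOf x = p ^ i) (hy : orderOf y = q ^ j) : Commute x y := by
  obtain ⟨P, hxP⟩ := Sylow.exists_mem_of_orderOf_eq_pow hx
  obtain ⟨Q, hyQ⟩ := Sylow.exists_mem_of_orderOf_eq_pow hy
  have hnormal := (Group.isNilpotent_of_finite_tfae (G := H)).out 0 3
  exact Subgroup.commute_of_normal_of_disjoint _ _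
    (hnormal.mp inferInstance p inferInstance P) (hnormal.mp inferInstance q inferInstance Q)
    (IsPGroup.disjoint_of_ne p q hpq _ _ P.isPGroup' Q.isPGroup') x y hxP hyQ

theorem exists_isConj_isPGroup_closure_pair {G : Type*} [Group G] [Finite G] {p i j : ℕ}
    [Fact p.Prime] {a b : G} (ha : orderOf a = p ^ i) (hb : orderOf b = p ^ j) :
    ∃ b', IsConj b b' ∧ IsPGroup p (Subgroup.closure {a, b'}) := by
  obtain ⟨P, haP⟩ := Sylow.exists_mem_of_orderOf_eq_pow ha
  obtain ⟨Q, hbQ⟩ := Sylow.exists_mem_of_orderOf_eq_pow hb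
  obtain ⟨g, rfl⟩ := MulAction.exists_smul_eq G Q P
  refine ⟨MulAut.conj g b, isConj_iff.mpr ⟨g, rfl⟩, (g • Q).isPGroup'.to_le ?_⟩
  rw [Subgroup.closure_le, Set.insert_subset_iff, Set.singleton_subset_iff, Sylow.coe_subgroup_smul]
  exact ⟨haP, Subgroup.smul_mem_pointwise_smul _ _ _ hbQ⟩

namespace IsEPPO

variable {G : Type*} [Group G] [Finite G]

theorem exists_orderOf_eq_pow_of_isNilpotent_closure (hG : IsEPPO G) {p i : ℕ} [Fact p.Prime]
    {x a : G} (hx : x ≠ 1) (hxp : orderOf x = p ^ i)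
    (hnil : Group.IsNilpotent (Subgroup.closure {x, a})) : ∃ j, orderOf a = p ^ j := by
  rcases eq_or_ne a 1 with rfl | ha
  · exact ⟨0, by simp⟩
  obtain ⟨q, j, hq, hj, hqa⟩ := (isPrimePow_nat_iff _).mp (hG a ha)
  obtain rfl | hpq := eq_or_ne p q
  · exact ⟨j, hqa.symm⟩
  have : Fact q.Prime := ⟨hq⟩
  have hi : i ≠ 0 := fun hi => hx (orderOf_eq_one_iff.mp (by rw [hxp, hi, pow_zero]))
  set H := Subgroup.closure ({x, a} : Set G)
  have hxH : x ∈ H := Subgroup.subset_closure (Set.mem_insert _ _)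
  have haH : a ∈ H := Subgroup.subset_closure (Set.mem_insert_of_mem _ rfl)
  have hxa : Commute x a := (Commute.of_orderOf_eq_pow_of_ne (x := (⟨x, hxH⟩ : H))
    (y := ⟨a, haH⟩) hpq (by rwa [Subgroup.orderOf_mk]) (by rw [Subgroup.orderOf_mk, hqa])).map
    H.subtype
  have hcop : (orderOf x).Coprime (orderOf a) := by
    rw [hxp, ← hqa]
    exact ((Nat.coprime_primes Fact.out hq).mpr hpq).pow i j
  have hord : orderOf (x * a) = p ^ i * q ^ j := by
    rw [hxa.orderOf_mul_eq_mul_orderOf_of_coprime hcop, hxp, ← hqa]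
  have hxa1 : x * a ≠ 1 := by
    intro h
    simp [h, eq_comm, hi, hj.ne', (Fact.out : p.Prime).ne_one] at hord
  have := isPrimePow_iff_unique_prime_dvd.mp (hord ▸ hG (x * a) hxa1)
  exact absurd (this.unique ⟨Fact.out, dvd_mul_of_dvd_left (dvd_pow_self p hi) _⟩
    ⟨hq, dvd_mul_of_dvd_right (dvd_pow_self q hj.ne') _⟩) hpq

theorem isClique_neighborSet_nccGraph (hG : IsEPPO G) (v : NCClass G) :
    (nccGraph G).IsClique ((nccGraph G).neighborSet v) := by
  obtain ⟨x, hxv, hxZ⟩ := v.2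
  have hx : x ≠ 1 := fun h => hxZ (h ▸ Subgroup.one_mem _)
  obtain ⟨p, i, hp, -, hxp⟩ := (isPrimePow_nat_iff _).mp (hG x hx)
  have : Fact p.Prime := ⟨hp⟩
  have hneighbor : ∀ c, (nccGraph G).Adj v c →
      ∃ a j, ConjClasses.mk a = c.1 ∧ orderOf a = p ^ j := by
    rintro c ⟨-, y, a, hyv, hac, hnil⟩
    obtain ⟨g, hg⟩ := ConjClasses.mk_eq_mk_iff_isConj.mp (hyv.trans hxv.symm)
    have hy : y ≠ 1 := by rintro rfl; exact hx (by simpa using hg.symm)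
    obtain ⟨j, hj⟩ := hG.exists_orderOf_eq_pow_of_isNilpotent_closure hy
      (hg.orderOf_eq.trans hxp.symm) hnil
    exact ⟨a, j, hac, hj⟩
  intro c hc d hd hcd
  obtain ⟨a, _, hac, ha⟩ := hneighbor c hc
  obtain ⟨b, _, hbd, hb⟩ := hneighbor d hd
  obtain ⟨b', hbb', hP⟩ := exists_isConj_isPGroup_closure_pair ha hb
  exact ⟨hcd, a, b', hac, (ConjClasses.mk_eq_mk_iff_isConj.mpr hbb'.symm).trans hbd,
    hP.isNilpotent⟩

end IsEPPO

theorem eppo_ncc_clawFree (G : Type*) [Group G] [Finite G] (hG : IsEPPO G) :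
    IsClawFree (nccGraph G) := by
  rintro ⟨v, a, b, -, hab, -, -, hva, hvb, -, hnab, -, -⟩
  exact hnab (hG.isClique_neighborSet_nccGraph v hva hvb hab)
end

section
/- Let G be a finite nilpotent group and let p and q be distinct primes such that some Sylow p-subgroup of G and some Sylow q-subgroup of G are both non-abelian. Then Γ_CCC(G) contains an induced path P_4 on four vertices and an induced cycle C_4 on four vertices; in particular, Γ_CCC(G) is neither a cograph nor a chordal graph. -/
/-!
In a finite nilpotent group the Sylow subgroups `P` and `Q` are normal and intersect trivially,
so they commute elementwise; moreover `G = P · C_G(P)`, so every `G`-conjugate of an element of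
`P` is already a `P`-conjugate. In the non-abelian `p`-group `P` pick `x ∈ Z₂(P) \ Z(P)` and `y`
not commuting with `x`: conjugating `x` only multiplies it by a central element, so no conjugate
of `x` commutes with a conjugate of `y`. Doing the same in `Q` gives `u, v`. Then
`x – u – y – v – x` is an induced `C₄`, and `x – u – y – yv` is an induced `P₄`: `yv` commutes
with `y`, whereas a conjugate of `x` (or `u`) commuting with a conjugate of `yv` would commute
with the matching conjugate of `y` (or `v`).
-/

section

open Subgroup

variable {G : Type*} [Group G]

def ConjNoncommuting (x y : G) : Prop :=
  ∀ a b : G, IsConj x a → IsConj y b → ¬Commute a b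

theorem Subgroup.Normal.mem_of_isConj {N : Subgroup G} (hN : N.Normal) {a b : G}
    (hab : IsConj a b) (ha : a ∈ N) : b ∈ N := by
  obtain ⟨g, rfl⟩ := isConj_iff.mp hab
  exact hN.conj_mem a ha g

theorem Subgroup.Normal.conjClassesMk_ne {N : Subgroup G} (hN : N.Normal) {a b : G}
    (ha : a ∈ N) (hb : b ∉ N) : ConjClasses.mk a ≠ ConjClasses.mk b :=
  fun hab => hb (hN.mem_of_isConj (ConjClasses.mk_eq_mk_iff_isConj.mp hab) ha)

namespace ConjNoncommuting

variable {x y : G}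

theorem not_commute (h : ConjNoncommuting x y) : ¬Commute x y :=
  h x y (.refl x) (.refl y)

theorem left_notMem_center (h : ConjNoncommuting x y) : x ∉ center G :=
  fun hx => h.not_commute (mem_center_iff.mp hx y).symm

theorem right_notMem_center (h : ConjNoncommuting x y) : y ∉ center G :=
  fun hy => h.not_commute (mem_center_iff.mp hy x)

theorem conjClassesMk_ne (h : ConjNoncommuting x y) : ConjClasses.mk x ≠ ConjClasses.mk y :=
  fun hxy => h x x (.refl x) (ConjClasses.mk_eq_mk_iff_isConj.mp hxy.symm) (.refl x)

theorem mul_right {N M : Subgroup G} (hN : N.Normal) (hM : M.Normal) (hNM : Disjoint N M)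
    {z : G} (hx : x ∈ N) (hz : z ∈ M) (h : ConjNoncommuting x y) :
    ConjNoncommuting x (y * z) := by
  intro a b ha hb hab
  obtain ⟨g, rfl⟩ := isConj_iff.mp hb
  have hza : Commute a (g * z * g⁻¹) :=
    commute_of_normal_of_disjoint N M hN hM hNM _ _ (hN.mem_of_isConj ha hx) (hM.conj_mem z hz g)
  rw [show g * (y * z) * g⁻¹ = g * y * g⁻¹ * (g * z * g⁻¹) by group] at hab
  exact h a _ ha (isConj_iff.mpr ⟨g, rfl⟩)
    (by simpa only [mul_inv_cancel_right] using hab.mul_right hza.inv_right)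

theorem of_mem_upperCentralSeries_two (hx : x ∈ Subgroup.upperCentralSeries G 2)
    (hxy : ¬Commute x y) : ConjNoncommuting x y := by
  intro a b ha hb hab
  obtain ⟨g, rfl⟩ := isConj_iff.mp ha
  obtain ⟨h, rfl⟩ := isConj_iff.mp hb
  set k := g⁻¹ * h
  have hxk : Commute x (k * y * k⁻¹) := by
    simpa [k, mul_assoc] using hab.map (MulAut.conj g⁻¹)
  have hz : x⁻¹ * k⁻¹ * x * k ∈ center G := by
    simpa [Subgroup.upperCentralSeries_one, commutatorElement_def] using
      Subgroup.mem_upperCentralSeries_succ_iff.mp (inv_mem hx) k⁻¹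
  have hxzy : Commute (x * (x⁻¹ * k⁻¹ * x * k)) y := by
    simpa [mul_assoc] using hxk.map (MulAut.conj k⁻¹)
  have hzy : Commute (x⁻¹ * k⁻¹ * x * k) y := (mem_center_iff.mp hz y).symm
  exact hxy (by simpa only [mul_inv_cancel_right] using hxzy.mul_left hzy.inv_left)

end ConjNoncommuting

theorem exists_conjNoncommuting_of_isNilpotent [Group.IsNilpotent G]
    (hG : ¬∀ a b : G, a * b = b * a) : ∃ x y : G, ConjNoncommuting x y := by
  have hlt : Subgroup.upperCentralSeries G 1 < Subgroup.upperCentralSeries G 2 := by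
    refine lt_of_le_of_ne (Subgroup.upperCentralSeries_mono G one_le_two) fun h => hG ?_
    have htop := Subgroup.upperCentralSeries.eq_top (by decide : (1 : ℕ) ≠ 2) h
    rw [Subgroup.upperCentralSeries_one] at htop
    exact fun a b => (mem_center_iff.mp (htop ▸ mem_top b) a)
  obtain ⟨x, hx2, hx1⟩ := SetLike.exists_of_lt hlt
  rw [Subgroup.upperCentralSeries_one, mem_center_iff] at hx1
  push Not at hx1
  obtain ⟨y, hy⟩ := hx1
  exact ⟨x, y, .of_mem_upperCentralSeries_two hx2 (Ne.symm hy)⟩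

theorem Subgroup.isConj_of_sup_centralizer_eq_top {H : Subgroup G} [H.Normal]
    (hH : H ⊔ centralizer H = ⊤) {a b : H} (hab : IsConj (a : G) b) : IsConj a b := by
  obtain ⟨g, hg⟩ := isConj_iff.mp hab
  have hg' : g ∈ ((H ⊔ centralizer H : Subgroup G) : Set G) := hH ▸ mem_top g
  obtain ⟨k, hk, c, hc, rfl⟩ := Set.mem_mul.mp (normal_mul H _ ▸ hg')
  refine isConj_iff.mpr ⟨⟨k, hk⟩, Subtype.ext ?_⟩
  have hca : c * a * c⁻¹ = a := by rw [← mem_centralizer_iff.mp hc a a.2, mul_inv_cancel_right]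
  rw [← hg, show k * c * a * (k * c)⁻¹ = k * (c * a * c⁻¹) * k⁻¹ by group, hca]
  rfl

theorem ConjNoncommuting.coe_of_sup_centralizer_eq_top {H : Subgroup G} [hHn : H.Normal]
    (hH : H ⊔ centralizer H = ⊤) {x y : H} (h : ConjNoncommuting x y) :
    ConjNoncommuting (x : G) y := by
  intro a b ha hb hab
  have ha' := hHn.mem_of_isConj ha x.2
  have hb' := hHn.mem_of_isConj hb y.2
  refine h ⟨a, ha'⟩ ⟨b, hb'⟩ (isConj_of_sup_centralizer_eq_top hH ha)
    (isConj_of_sup_centralizer_eq_top hH hb) (Subtype.ext hab)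

theorem Subgroup.eq_top_of_forall_exists_sylow_le [Finite G] (H : Subgroup G)
    (hH : ∀ (p : ℕ) [Fact p.Prime], ∃ P : Sylow p G, (P : Subgroup G) ≤ H) : H = ⊤ := by
  refine index_eq_one.mp (Nat.eq_one_iff_not_exists_prime_dvd.mpr fun p hp hpH => ?_)
  have := Fact.mk hp
  obtain ⟨P, hPH⟩ := hH p
  exact P.not_dvd_index (hpH.trans (index_dvd_of_le hPH))

theorem Sylow.sup_centralizer_eq_top [Finite G] [Group.IsNilpotent G] {p : ℕ} [Fact p.Prime]
    (P : Sylow p G) : (P : Subgroup G) ⊔ centralizer P = ⊤ := by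
  refine eq_top_of_forall_exists_sylow_le _ fun r _ => ?_
  obtain ⟨R⟩ : Nonempty (Sylow r G) := inferInstance
  by_cases hrp : r = p
  · subst hrp
    exact ⟨P, le_sup_left⟩
  · refine ⟨R, le_sup_of_le_right fun a ha => mem_centralizer_iff.mpr fun b hb => ?_⟩
    exact commute_of_normal_of_disjoint _ _ inferInstance inferInstance
      (IsPGroup.disjoint_of_ne p r (Ne.symm hrp) _ _ P.isPGroup' R.isPGroup') b a hb ha

theorem hasInducedCycle_four {V : Type*} {Γ : SimpleGraph V} {a b c d : V}
    (hab : Γ.Adj a b) (hbc : Γ.Adj b c) (hcd : Γ.Adj c d) (hda : Γ.Adj d a)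
    (hac : ¬Γ.Adj a c) (hbd : ¬Γ.Adj b d) (hac' : a ≠ c) (hbd' : b ≠ d) :
    HasInducedCycle Γ 4 := by
  have hcases : ∀ i : ZMod 4, i = 0 ∨ i = 1 ∨ i = 2 ∨ i = 3 := by decide
  have := hab.symm; have := hbc.symm; have := hcd.symm; have := hda.symm
  have hca : ¬Γ.Adj c a := fun h => hac h.symm
  have hdb : ¬Γ.Adj d b := fun h => hbd h.symm
  refine ⟨![a, b, c, d], fun i j hij => ?_, fun i j => ?_⟩
  · rcases hcases i with rfl | rfl | rfl | rfl <;> rcases hcases j with rfl | rfl | rfl | rfl <;>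
      first
      | rfl
      | exact absurd hij ‹_›
      | exact absurd hij.symm ‹_›
      | exact absurd hij (SimpleGraph.Adj.ne ‹_›)
  · rcases hcases i with rfl | rfl | rfl | rfl <;> rcases hcases j with rfl | rfl | rfl | rfl <;>
      first
      | exact iff_of_true ‹_› (by decide)
      | exact iff_of_false ‹_› (by decide)
      | exact iff_of_false (Γ.irrefl) (by decide)

def NCClass.of (x : G) (hx : x ∉ center G) : NCClass G :=
  ⟨ConjClasses.mk x, x, rfl, hx⟩

theorem NCClass.of_ne_of {x y : G} {hx : x ∉ center G} {hy : y ∉ center G}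
    (h : ConjClasses.mk x ≠ ConjClasses.mk y) : NCClass.of x hx ≠ .of y hy :=
  fun he => h (congrArg Subtype.val he)

theorem cccGraph_adj_of_commute {x y : G} (hx : x ∉ center G) (hy : y ∉ center G)
    (hne : ConjClasses.mk x ≠ ConjClasses.mk y) (h : Commute x y) :
    (cccGraph G).Adj (.of x hx) (.of y hy) := by
  have hpair : ∀ a ∈ ({x, y} : Set G), ∀ b ∈ ({x, y} : Set G), a * b = b * a := by
    rintro a (rfl | rfl) b (rfl | rfl)
    exacts [rfl, h.eq, h.eq.symm, rfl]
  refine ⟨NCClass.of_ne_of hne, x, y, rfl, rfl, fun a ha b hb => ?_⟩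
  exact Set.centralizer_centralizer_comm_of_comm hpair a (closure_le_centralizer_centralizer _ ha)
    b (closure_le_centralizer_centralizer _ hb)

theorem ConjNoncommuting.not_cccGraph_adj {x y : G} (h : ConjNoncommuting x y) :
    ¬(cccGraph G).Adj (.of x h.left_notMem_center) (.of y h.right_notMem_center) := by
  rintro ⟨-, a, b, ha, hb, hab⟩
  exact h a b (ConjClasses.mk_eq_mk_iff_isConj.mp ha.symm)
    (ConjClasses.mk_eq_mk_iff_isConj.mp hb.symm)
    (hab a (subset_closure (by simp)) b (subset_closure (by simp)))

theorem notMem_of_disjoint_of_notMem_center {N M : Subgroup G} (hNM : Disjoint N M) {u : G}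
    (hu : u ∈ M) (huZ : u ∉ center G) : u ∉ N :=
  fun huN => huZ (disjoint_def.mp hNM huN hu ▸ one_mem _)

theorem cccGraph_adj_of_disjoint_normal {N M : Subgroup G} (hN : N.Normal) (hM : M.Normal)
    (hNM : Disjoint N M) {x u : G} (hx : x ∈ N) (hu : u ∈ M) (hxZ : x ∉ center G)
    (huZ : u ∉ center G) : (cccGraph G).Adj (.of x hxZ) (.of u huZ) :=
  cccGraph_adj_of_commute hxZ huZ
    (hN.conjClassesMk_ne hx (notMem_of_disjoint_of_notMem_center hNM hu huZ))
    (commute_of_normal_of_disjoint N M hN hM hNM x u hx hu)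

theorem hasInducedCycle_four_cccGraph {N M : Subgroup G} (hN : N.Normal) (hM : M.Normal)
    (hNM : Disjoint N M) {x y u v : G} (hx : x ∈ N) (hy : y ∈ N) (hu : u ∈ M) (hv : v ∈ M)
    (hxy : ConjNoncommuting x y) (huv : ConjNoncommuting u v) :
    HasInducedCycle (cccGraph G) 4 :=
  hasInducedCycle_four (cccGraph_adj_of_disjoint_normal hN hM hNM hx hu _ _)
    (cccGraph_adj_of_disjoint_normal hN hM hNM hy hu _ _).symm
    (cccGraph_adj_of_disjoint_normal hN hM hNM hy hv _ _)
    (cccGraph_adj_of_disjoint_normal hN hM hNM hx hv _ _).symm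
    hxy.not_cccGraph_adj huv.not_cccGraph_adj
    (NCClass.of_ne_of hxy.conjClassesMk_ne) (NCClass.of_ne_of huv.conjClassesMk_ne)

theorem hasInducedP4_cccGraph {N M : Subgroup G} (hN : N.Normal) (hM : M.Normal)
    (hNM : Disjoint N M) {x y u v : G} (hx : x ∈ N) (hy : y ∈ N) (hu : u ∈ M) (hv : v ∈ M)
    (hxy : ConjNoncommuting x y) (huv : ConjNoncommuting u v) :
    HasInducedP4 (cccGraph G) := by
  have hyv : Commute y v := commute_of_normal_of_disjoint N M hN hM hNM y v hy hv
  have hxyv : ConjNoncommuting x (y * v) := hxy.mul_right hN hM hNM hx hv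
  have huyv : ConjNoncommuting u (y * v) := hyv.eq ▸ huv.mul_right hM hN hNM.symm hu hy
  have hyvN : y * v ∉ N := fun h =>
    notMem_of_disjoint_of_notMem_center hNM hv huv.right_notMem_center
      ((N.mul_mem_cancel_left hy).mp h)
  have hxu := cccGraph_adj_of_disjoint_normal hN hM hNM hx hu hxy.left_notMem_center
    huv.left_notMem_center
  have huy := (cccGraph_adj_of_disjoint_normal hN hM hNM hy hu hxy.right_notMem_center
    huv.left_notMem_center).symm
  have hy_yv := cccGraph_adj_of_commute hxy.right_notMem_center hxyv.right_notMem_center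
    (hN.conjClassesMk_ne hy hyvN) ((Commute.refl y).mul_right hyv)
  exact ⟨_, _, _, _, hxu.ne, NCClass.of_ne_of hxy.conjClassesMk_ne,
    NCClass.of_ne_of hxyv.conjClassesMk_ne, huy.ne, NCClass.of_ne_of huyv.conjClassesMk_ne,
    hy_yv.ne, hxu, huy, hy_yv, hxy.not_cccGraph_adj, hxyv.not_cccGraph_adj,
    huyv.not_cccGraph_adj⟩

end

theorem nilpotent_two_nonabelian_sylows_ccc_P4_C4 (G : Type*) [Group G] [Finite G]
    (hnil : Group.IsNilpotent G) (p q : ℕ) (hp : p.Prime) (hq : q.Prime) (hpq : p ≠ q)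
    (P : Sylow p G) (Q : Sylow q G)
    (hP : ¬ ∀ a b : (P : Subgroup G), a * b = b * a)
    (hQ : ¬ ∀ a b : (Q : Subgroup G), a * b = b * a) :
    HasInducedP4 (cccGraph G) ∧ HasInducedCycle (cccGraph G) 4 ∧
      ¬ IsCograph (cccGraph G) ∧ ¬ IsChordal (cccGraph G) := by
  have := Fact.mk hp
  have := Fact.mk hq
  have hPQ : Disjoint (P : Subgroup G) Q :=
    IsPGroup.disjoint_of_ne p q hpq _ _ P.isPGroup' Q.isPGroup'
  have := P.isPGroup'.isNilpotent
  have := Q.isPGroup'.isNilpotent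
  obtain ⟨x, y, hxy⟩ := exists_conjNoncommuting_of_isNilpotent hP
  obtain ⟨u, v, huv⟩ := exists_conjNoncommuting_of_isNilpotent hQ
  replace hxy := hxy.coe_of_sup_centralizer_eq_top P.sup_centralizer_eq_top
  replace huv := huv.coe_of_sup_centralizer_eq_top Q.sup_centralizer_eq_top
  have hP4 := hasInducedP4_cccGraph inferInstance inferInstance hPQ x.2 y.2 u.2 v.2 hxy huv
  have hC4 :=
    hasInducedCycle_four_cccGraph inferInstance inferInstance hPQ x.2 y.2 u.2 v.2 hxy huv
  exact ⟨hP4, hC4, fun h => h hP4, fun h => h 4 le_rfl hC4⟩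
end
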